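/- Let t be a nonzero real number, and let (m_{2k})_{k≥1} and (a_{2n})_{n≥1} be real sequences satisfying the formal power series identity exp(t Σ_{k≥1} (m_{2k}/k) z^{2k}) = 1 + Σ_{n≥1} a_{2n} z^{2n} in ℝ[[z]]. Then for every n ≥ 1: a_{2n} = (1/(2n)!) · Σ_{π ∈ P^even(2n)} ((2t)^{#(π)} Π_{B∈π} (|B|−1)!) · m_π, and m_{2n} = (1/(2(2n−1)!·t)) · Σ_{π ∈ P^even(2n)} ((−1)^{#(π)−1} (#(π)−1)! Π_{B∈π} |B|!) · a_π. -/

import Mathlib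

open Finset

/-- All blocks have even cardinality. -/
def IsEvenPartition {n : ℕ} (π : Finpartition (Finset.univ : Finset (Fin n))) : Prop :=
  ∀ B ∈ π.parts, Even B.card

open Classical in
/-- The finite set of even set partitions of `[n]`. -/
noncomputable def evenPartitions (n : ℕ) :
    Finset (Finpartition (Finset.univ : Finset (Fin n))) :=
  Finset.univ.filter IsEvenPartition

/-- Formal exponential of a power series with zero constant term. -/
noncomputable def fexp (F : PowerSeries ℝ) : PowerSeries ℝ :=
  PowerSeries.mk fun n =>
    ∑ k ∈ Finset.range (n + 1), (PowerSeries.coeff n (F ^ k)) / (k.factorial : ℝ)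

/-- The series `Σ_{k≥1} (x_k/k) z^{2k}` associated to a sequence `(x_{2k})_{k≥1}`
(where `x k` stands for `x_{2k}`). -/
noncomputable def evenSeries (x : ℕ → ℝ) : PowerSeries ℝ :=
  PowerSeries.mk fun j => if j ≠ 0 ∧ j % 2 = 0 then x (j / 2) / ((j / 2 : ℕ) : ℝ) else 0

/-- The series `1 + Σ_{n≥1} a_{2n} z^{2n}` (where `a n` stands for `a_{2n}`). -/
noncomputable def coeffSeries (a : ℕ → ℝ) : PowerSeries ℝ :=
  PowerSeries.mk fun j =>
    if j = 0 then 1 else if j % 2 = 0 then a (j / 2) else 0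

/-!
Both formulas are instances of the exponential formula: if `F(0) = 0`, then for any weights
`cₖ` the sum over the set partitions `P` of an `s`-element set of
`c_{#P} ∏_{B ∈ P} |B|! [z^|B|] F` equals `s! [z^s] ∑ₖ cₖ Fᵏ / k!`. Removing the block that contains
a fixed element gives a recursion for the left side, and the right side satisfies the same
recursion because `(d + 1) [z^(d+1)] F^(k+1) = (k + 1) [z^d] (Fᵏ F')`.

With `cₖ = 1` and `F = t · evenSeries m` the right side is `(2n)! a_{2n}`. With
`cₖ = (-1)^(k-1) (k-1)!` and `F = coeffSeries a - 1` it is `(2n)! [z^(2n)] log (coeffSeries a)`,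
which is `(2n)! [z^(2n)] (t · evenSeries m)` since the formal logarithm inverts the formal
exponential (both `log (exp F)` and `F` vanish at `0` and have derivative `F'`). In both cases
the blocks of odd size contribute zero, leaving only the even partitions.
-/

open PowerSeries
open scoped Nat

section PowerSeriesLemmas

variable {R : Type*} [CommSemiring R]

theorem PowerSeries.coeff_pow_eq_zero_of_lt {F : R⟦X⟧} (hF : constantCoeff F = 0) {n k : ℕ}
    (h : n < k) : coeff n (F ^ k) = 0 :=
  coeff_of_lt_order n ((Nat.cast_lt.2 h).trans_le (le_order_pow_of_constantCoeff_eq_zero k hF))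

theorem PowerSeries.coeff_mul_congr_right {F G H : R⟦X⟧} {n : ℕ}
    (h : ∀ i ≤ n, coeff i G = coeff i H) : coeff n (F * G) = coeff n (F * H) := by
  simp only [coeff_mul]
  exact sum_congr rfl fun p hp => by rw [h p.2 (HasAntidiagonal.antidiagonal.snd_le hp)]

theorem PowerSeries.coeff_pow_mul_eq_zero_of_lt {F : R⟦X⟧}
    (hF : constantCoeff F = 0) (G : R⟦X⟧) {n k : ℕ} (h : n < k) : coeff n (F ^ k * G) = 0 := by
  rw [mul_comm, coeff_mul_congr_right (H := 0) fun i hi => coeff_pow_eq_zero_of_lt hF (by omega),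
    mul_zero, map_zero]

end PowerSeriesLemmas

section EgfComposition

variable {K : Type*} [Field K]

/-- Agrees with `(∑ₖ cₖ zᵏ / k!) ∘ F` in degrees `< N` when `F` has no constant term. -/
noncomputable def egfCompTrunc (c : ℕ → K) (N : ℕ) (F : K⟦X⟧) : K⟦X⟧ :=
  ∑ k ∈ range N, C (c k / k !) * F ^ k

theorem coeff_egfCompTrunc_of_lt {c : ℕ → K} {F : K⟦X⟧} (hF : constantCoeff F = 0) {d N : ℕ}
    (h : d < N) : coeff d (egfCompTrunc c N F) = coeff d (egfCompTrunc c (d + 1) F) := by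
  simp only [egfCompTrunc, map_sum, coeff_C_mul]
  refine (sum_subset (range_subset_range.2 h) fun k _ hk => ?_).symm
  rw [coeff_pow_eq_zero_of_lt hF (by simp at hk; omega), mul_zero]

theorem derivative_egfCompTrunc [CharZero K] (c : ℕ → K) (N : ℕ) (F : K⟦X⟧) :
    d⁄dX K (egfCompTrunc c (N + 1) F) = d⁄dX K F * egfCompTrunc (fun k => c (k + 1)) N F := by
  rw [egfCompTrunc, egfCompTrunc, sum_range_succ', map_add, map_sum, mul_sum]
  simp only [pow_zero, mul_one, derivative_C, add_zero]
  refine sum_congr rfl fun k _ => ?_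
  have hk : (c (k + 1) / (k + 1)! : K) * (k + 1 : ℕ) = c (k + 1) / k ! := by
    rw [Nat.factorial_succ]; push_cast; field_simp
  rw [Derivation.leibniz, derivative_C, smul_zero, add_zero, derivative_pow, smul_eq_mul,
    Nat.add_sub_cancel, ← map_natCast C, ← hk, map_mul]
  ring

theorem factorial_mul_coeff_egfCompTrunc_succ [CharZero K] (c : ℕ → K) {F : K⟦X⟧}
    (hF : constantCoeff F = 0) (d : ℕ) :
    ((d + 1)! : K) * coeff (d + 1) (egfCompTrunc c (d + 2) F) =
      ∑ j ∈ range (d + 1), d.choose j • (((j + 1)! : K) * coeff (j + 1) F *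
        ((d - j)! * coeff (d - j) (egfCompTrunc (fun k => c (k + 1)) (d - j + 1) F))) := by
  calc ((d + 1)! : K) * coeff (d + 1) (egfCompTrunc c (d + 2) F)
      = d ! * coeff d (d⁄dX K (egfCompTrunc c (d + 2) F)) := by
        rw [coeff_derivative, Nat.factorial_succ]; push_cast; ring
    _ = ∑ j ∈ range (d + 1), d ! * ((j + 1) * coeff (j + 1) F *
          coeff (d - j) (egfCompTrunc (fun k => c (k + 1)) (d + 1) F)) := by
        rw [derivative_egfCompTrunc, coeff_mul, Nat.sum_antidiagonal_eq_sum_range_succ_mk, mul_sum]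
        refine sum_congr rfl fun j _ => ?_
        rw [coeff_derivative]; ring
    _ = _ := by
        refine sum_congr rfl fun j hj => ?_
        have hjd : j ≤ d := Nat.lt_succ_iff.1 (mem_range.1 hj)
        have hchoose : (d.choose j : K) * j ! * (d - j)! = d ! := by
          exact_mod_cast Nat.choose_mul_factorial_mul_factorial hjd
        rw [coeff_egfCompTrunc_of_lt hF (by omega : d - j < d + 1), nsmul_eq_mul, ← hchoose,
          Nat.factorial_succ]
        push_cast; ring

end EgfComposition

namespace Finpartition

section Avoid

variable {α : Type*} [GeneralizedBooleanAlgebra α] [DecidableEq α] {a b : α}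

theorem avoid_parts_of_mem (P : Finpartition a) (hb : b ∈ P.parts) :
    (P.avoid b).parts = P.parts.erase b := by
  ext d
  simp only [mem_avoid, mem_erase]
  constructor
  · rintro ⟨e, he, hnle, rfl⟩
    have hne : e ≠ b := by rintro rfl; exact hnle le_rfl
    have hdisj : Disjoint e b := P.disjoint he hb hne
    rw [hdisj.sdiff_eq_left]
    exact ⟨hne, he⟩
  · rintro ⟨hne, hd⟩
    have hdisj : Disjoint d b := P.disjoint hd hb hne
    exact ⟨d, hd, fun hle => P.ne_bot hd (hdisj.eq_bot_of_le hle), hdisj.sdiff_eq_left⟩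

theorem avoid_extend (Q : Finpartition (a \ b)) (hb : b ≠ ⊥) (hab : Disjoint (a \ b) b)
    (ha : a \ b ⊔ b = a) : (Q.extend hb hab ha).avoid b = Q := by
  have hQ : b ∉ Q.parts := fun h => hb (hab.symm.eq_bot_of_le (Q.le h))
  ext1
  rw [avoid_parts_of_mem _ (by simp), extend_parts, erase_insert hQ]

end Avoid

variable {α : Type*} [DecidableEq α] {s : Finset α} {x : α}

theorem sum_eq_sum_sum_insert_parts {M : Type*} [AddCommMonoid M] (hx : x ∈ s)
    (g : Finset (Finset α) → M) :
    ∑ P : Finpartition s, g P.parts =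
      ∑ B ∈ s.powerset with x ∈ B, ∑ Q : Finpartition (s \ B), g (insert B Q.parts) := by
  have mem_of_mem {B : Finset α} (hB : B ∈ {B ∈ s.powerset | x ∈ B}) : B ⊆ s ∧ x ∈ B := by
    simpa using hB
  have part_mem (P : Finpartition s) : P.part x ∈ {B ∈ s.powerset | x ∈ B} :=
    mem_filter.2 ⟨mem_powerset.2 (P.le (P.part_mem.2 hx)), P.mem_part hx⟩
  rw [sum_sigma']
  refine sum_bij' (fun P _ => ⟨P.part x, P.avoid (P.part x)⟩)
    (fun p hp => p.2.extend (ne_empty_of_mem (mem_of_mem (mem_sigma.1 hp).1).2) sdiff_disjoint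
      (sdiff_union_of_subset (mem_of_mem (mem_sigma.1 hp).1).1))
    (fun P _ => mem_sigma.2 ⟨part_mem P, mem_univ _⟩)
    (fun _ _ => mem_univ _) (fun P _ => ?_) (fun ⟨B, Q⟩ hp => ?_) (fun P _ => ?_)
  · ext1
    rw [extend_parts, avoid_parts_of_mem _ (P.part_mem.2 hx), insert_erase (P.part_mem.2 hx)]
  · have hxB := (mem_of_mem (mem_sigma.1 hp).1).2
    dsimp only
    rw [(Q.extend _ _ _).part_eq_of_mem (by simp) hxB, avoid_extend]
  · rw [avoid_parts_of_mem _ (P.part_mem.2 hx), insert_erase (P.part_mem.2 hx)]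

end Finpartition

theorem Finset.sum_filter_mem_powerset_apply_card {α M : Type*} [DecidableEq α] [AddCommMonoid M]
    {s : Finset α} {x : α} (hx : x ∈ s) {d : ℕ} (hs : s.card = d + 1) (h : ℕ → M) :
    ∑ B ∈ s.powerset with x ∈ B, h B.card = ∑ j ∈ range (d + 1), d.choose j • h (j + 1) := by
  have hxt : x ∉ s.erase x := notMem_erase x s
  have ht : (s.erase x).card = d := by rw [card_erase_of_mem hx, hs, Nat.add_sub_cancel]
  rw [← insert_erase hx, sum_filter, sum_powerset_insert hxt, ← ht, ← sum_powerset_apply_card]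
  have hout : ∀ B ∈ (s.erase x).powerset, x ∉ B := fun B hB hxB => hxt (mem_powerset.1 hB hxB)
  rw [sum_eq_zero fun B hB => if_neg (hout B hB), zero_add]
  exact sum_congr rfl fun B hB => by
    rw [if_pos (mem_insert_self x B), card_insert_of_notMem (hout B hB)]

section ExponentialFormula

variable {K : Type*} [Field K] [CharZero K] {α : Type*} [DecidableEq α]

theorem sum_finpartition_eq_factorial_mul_coeff_egfCompTrunc {F : K⟦X⟧}
    (hF : constantCoeff F = 0) (c : ℕ → K) (s : Finset α) :
    ∑ P : Finpartition s, c P.parts.card * ∏ B ∈ P.parts, ((B.card ! : K) * coeff B.card F) =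
      s.card ! * coeff s.card (egfCompTrunc c (s.card + 1) F) := by
  induction hs : s.card using Nat.strong_induction_on generalizing s c with
  | _ d ih =>
  rcases d with _ | d
  · rw [card_eq_zero] at hs
    subst hs
    show ∑ P : Finpartition (⊥ : Finset α), _ = _
    rw [Fintype.sum_unique, Finpartition.parts_eq_empty_iff.2 rfl]
    simp [egfCompTrunc]
  obtain ⟨x, hx⟩ : s.Nonempty := card_pos.1 (by omega)
  rw [Finpartition.sum_eq_sum_sum_insert_parts hx
    fun parts => c parts.card * ∏ B ∈ parts, ((B.card ! : K) * coeff B.card F)]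
  calc _ = ∑ B ∈ s.powerset with x ∈ B, ((B.card ! : K) * coeff B.card F) *
        ((d + 1 - B.card)! * coeff (d + 1 - B.card)
          (egfCompTrunc (fun k => c (k + 1)) (d + 1 - B.card + 1) F)) := by
        refine sum_congr rfl fun B hB => ?_
        obtain ⟨hBs, hxB⟩ : B ⊆ s ∧ x ∈ B := by simpa using hB
        have hcard : (s \ B).card = d + 1 - B.card := by rw [card_sdiff_of_subset hBs, hs]
        have hlt : (s \ B).card < d + 1 := by
          have := card_pos.2 ⟨x, hxB⟩; omega
        have hnotMem (Q : Finpartition (s \ B)) : B ∉ Q.parts := fun hBQ =>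
          (Q.le hBQ hxB |> mem_sdiff.1).2 hxB
        rw [← hcard, ← ih _ hlt (fun k => c (k + 1)) (s \ B) rfl, mul_sum]
        refine sum_congr rfl fun Q _ => ?_
        rw [card_insert_of_notMem (hnotMem Q), prod_insert (hnotMem Q)]
        ring
    _ = ∑ j ∈ range (d + 1), d.choose j • (((j + 1)! : K) * coeff (j + 1) F *
        ((d - j)! * coeff (d - j) (egfCompTrunc (fun k => c (k + 1)) (d - j + 1) F))) := by
        rw [sum_filter_mem_powerset_apply_card hx hs fun j => ((j ! : K) * coeff j F) *
          ((d + 1 - j)! * coeff (d + 1 - j) (egfCompTrunc (fun k => c (k + 1)) (d + 1 - j + 1) F))]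
        simp only [Nat.add_sub_add_right]
    _ = _ := (factorial_mul_coeff_egfCompTrunc_succ c hF d).symm

end ExponentialFormula

theorem coeff_fexp_eq_coeff_egfCompTrunc {F : ℝ⟦X⟧} (hF : constantCoeff F = 0) {n N : ℕ}
    (h : n < N) : coeff n (fexp F) = coeff n (egfCompTrunc (fun _ => 1) N F) := by
  rw [coeff_egfCompTrunc_of_lt hF h, fexp, coeff_mk, egfCompTrunc, map_sum]
  exact sum_congr rfl fun k _ => by rw [coeff_C_mul]; ring

theorem constantCoeff_fexp (F : ℝ⟦X⟧) : constantCoeff (fexp F) = 1 := by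
  rw [← coeff_zero_eq_constantCoeff_apply, fexp, coeff_mk]
  simp

theorem derivative_fexp {F : ℝ⟦X⟧} (hF : constantCoeff F = 0) :
    d⁄dX ℝ (fexp F) = d⁄dX ℝ F * fexp F := by
  ext n
  rw [coeff_derivative, coeff_fexp_eq_coeff_egfCompTrunc hF (by omega : n + 1 < n + 2),
    ← coeff_derivative, derivative_egfCompTrunc]
  exact coeff_mul_congr_right fun i hi => (coeff_fexp_eq_coeff_egfCompTrunc hF (by omega)).symm

section FormalLog

variable {K : Type*} [Field K]

noncomputable def flog (A : K⟦X⟧) : K⟦X⟧ :=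
  mk fun n => ∑ k ∈ range n, (-1 : K) ^ k / (k + 1) * coeff n ((A - 1) ^ (k + 1))

noncomputable def logTrunc (N : ℕ) (E : K⟦X⟧) : K⟦X⟧ :=
  ∑ k ∈ range N, C ((-1 : K) ^ k / (k + 1)) * E ^ (k + 1)

theorem constantCoeff_flog (A : K⟦X⟧) : constantCoeff (flog A) = 0 := by
  rw [← coeff_zero_eq_constantCoeff_apply, flog, coeff_mk, range_zero, sum_empty]

theorem coeff_flog_eq_coeff_logTrunc {A : K⟦X⟧} (hA : constantCoeff A = 1) {n N : ℕ}
    (h : n ≤ N) : coeff n (flog A) = coeff n (logTrunc N (A - 1)) := by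
  have hE : constantCoeff (A - 1) = 0 := by simp [hA]
  simp only [flog, logTrunc, coeff_mk, map_sum, coeff_C_mul]
  refine sum_subset (range_subset_range.2 h) fun k _ hk => ?_
  rw [coeff_pow_eq_zero_of_lt hE (by simp at hk; omega), mul_zero]

theorem derivative_logTrunc [CharZero K] (N : ℕ) (E : K⟦X⟧) :
    d⁄dX K (logTrunc N E) = (∑ k ∈ range N, (-E) ^ k) * d⁄dX K E := by
  rw [logTrunc, map_sum, sum_mul]
  refine sum_congr rfl fun k _ => ?_
  have hk : ((-1) ^ k / (k + 1) : K) * (k + 1 : ℕ) = (-1) ^ k := by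
    push_cast; field_simp
  have hC : C ((-1 : K) ^ k / (k + 1)) * C ((k + 1 : ℕ) : K) = (-1) ^ k := by
    rw [← map_mul, hk, map_pow, map_neg, map_one]
  rw [Derivation.leibniz, derivative_C, smul_zero, add_zero, derivative_pow, smul_eq_mul,
    Nat.add_sub_cancel, ← map_natCast C, neg_pow E]
  linear_combination (E ^ k * d⁄dX K E) * hC

theorem derivative_flog_mul [CharZero K] {A : K⟦X⟧} (hA : constantCoeff A = 1) :
    d⁄dX K (flog A) * A = d⁄dX K A := by
  have hE : constantCoeff (-(A - 1)) = 0 := by simp [hA]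
  ext n
  have htrunc (i) (hi : i ≤ n) :
      coeff i (d⁄dX K (flog A)) = coeff i (d⁄dX K (logTrunc (n + 1) (A - 1))) := by
    rw [coeff_derivative, coeff_derivative, coeff_flog_eq_coeff_logTrunc hA (N := n + 1) (by omega)]
  have hgeom : A * ∑ k ∈ range (n + 1), (-(A - 1)) ^ k = 1 - (-(A - 1)) ^ (n + 1) := by
    simpa using mul_neg_geom_sum (-(A - 1)) (n + 1)
  have hdE : d⁄dX K (A - 1) = d⁄dX K A := by rw [map_sub, Derivation.map_one_eq_zero, sub_zero]
  rw [mul_comm, coeff_mul_congr_right htrunc, derivative_logTrunc, hdE, ← mul_assoc, hgeom,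
    sub_mul, one_mul, map_sub, coeff_pow_mul_eq_zero_of_lt hE _ (Nat.lt_succ_self n), sub_zero]

theorem coeff_flog_eq_coeff_egfCompTrunc [CharZero K] {A : K⟦X⟧} {n : ℕ} (hn : n ≠ 0) :
    coeff n (flog A) =
      coeff n (egfCompTrunc (fun k => (-1) ^ (k - 1) * ((k - 1)! : K)) (n + 1) (A - 1)) := by
  rw [flog, coeff_mk, egfCompTrunc, sum_range_succ', map_add, map_sum, pow_zero (A - 1), mul_one,
    coeff_C, if_neg hn, add_zero]
  refine sum_congr rfl fun k _ => ?_
  have hk : (k ! : K) ≠ 0 := Nat.cast_ne_zero.2 k.factorial_ne_zero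
  rw [coeff_C_mul, Nat.add_sub_cancel, Nat.factorial_succ]
  push_cast
  field_simp

end FormalLog

theorem flog_fexp {F : ℝ⟦X⟧} (hF : constantCoeff F = 0) : flog (fexp F) = F := by
  have hA := constantCoeff_fexp F
  have hne : fexp F ≠ 0 := fun h => by simp [h] at hA
  refine derivative.ext (mul_right_cancel₀ hne ?_) (by rw [constantCoeff_flog, hF])
  rw [derivative_flog_mul hA, derivative_fexp hF]

theorem sum_finpartition_eq_sum_evenPartitions {R : Type*} [CommSemiring R] {N : ℕ}
    (c f g : ℕ → R) (hfg : ∀ j ≠ 0, f j = if Even j then g j else 0) :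
    ∑ P : Finpartition (univ : Finset (Fin N)), c P.parts.card * ∏ B ∈ P.parts, f B.card =
      ∑ P ∈ evenPartitions N, c P.parts.card * ∏ B ∈ P.parts, g B.card := by
  rw [evenPartitions, sum_filter]
  refine sum_congr rfl fun P _ => ?_
  have hf (B) (hB : B ∈ P.parts) : f B.card = if Even B.card then g B.card else 0 :=
    hfg _ (card_ne_zero.2 (P.nonempty_of_mem_parts hB))
  split_ifs with hP
  · exact congrArg _ (prod_congr rfl fun B hB => by rw [hf B hB, if_pos (hP B hB)])
  · obtain ⟨B, hB, hodd⟩ : ∃ B ∈ P.parts, ¬Even B.card := by simpa [IsEvenPartition] using hP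
    rw [prod_eq_zero hB (by rw [hf B hB, if_neg hodd]), mul_zero]

theorem constantCoeff_evenSeries (x : ℕ → ℝ) : constantCoeff (evenSeries x) = 0 := by
  rw [← coeff_zero_eq_constantCoeff_apply, evenSeries, coeff_mk, if_neg (by simp)]

theorem factorial_mul_coeff_evenSeries (x : ℕ → ℝ) {j : ℕ} (hj : j ≠ 0) :
    (j ! : ℝ) * coeff j (evenSeries x) = if Even j then 2 * (j - 1)! * x (j / 2) else 0 := by
  rw [evenSeries, coeff_mk]
  split_ifs with h₁ h₂ h₂
  · obtain ⟨i, rfl⟩ := h₂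
    have hi : i ≠ 0 := by omega
    rw [← Nat.mul_factorial_pred (by omega : i + i ≠ 0), show (i + i) / 2 = i by omega]
    push_cast
    field_simp
    ring
  · exact absurd (Nat.even_iff.2 h₁.2) h₂
  · exact absurd ⟨hj, Nat.even_iff.1 ‹Even j›⟩ h₁
  · rw [mul_zero]

theorem constantCoeff_coeffSeries (a : ℕ → ℝ) : constantCoeff (coeffSeries a) = 1 := by
  rw [← coeff_zero_eq_constantCoeff_apply, coeffSeries, coeff_mk, if_pos rfl]

theorem coeff_coeffSeries (a : ℕ → ℝ) {j : ℕ} (hj : j ≠ 0) :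
    coeff j (coeffSeries a) = if Even j then a (j / 2) else 0 := by
  simp only [coeffSeries, coeff_mk, if_neg hj, Nat.even_iff]

theorem sum_evenPartitions_eq_factorial_mul_coeff_fexp (t : ℝ) (m : ℕ → ℝ) (N : ℕ) :
    ∑ π ∈ evenPartitions N,
        ((2 * t) ^ π.parts.card * ∏ B ∈ π.parts, ((B.card - 1)! : ℝ)) *
          ∏ B ∈ π.parts, m (B.card / 2) =
      N ! * coeff N (fexp (C t * evenSeries m)) := by
  have hF : constantCoeff (C t * evenSeries m) = 0 := by simp [constantCoeff_evenSeries]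
  have hexp := sum_finpartition_eq_factorial_mul_coeff_egfCompTrunc hF (fun _ => 1)
    (univ : Finset (Fin N))
  rw [sum_finpartition_eq_sum_evenPartitions (fun _ => 1)
      (fun j => (j ! : ℝ) * coeff j (C t * evenSeries m)) (fun j => 2 * t * (j - 1)! * m (j / 2))
      fun j hj => by
        rw [coeff_C_mul, mul_left_comm, factorial_mul_coeff_evenSeries m hj]; split_ifs <;> ring,
    card_univ, Fintype.card_fin, ← coeff_fexp_eq_coeff_egfCompTrunc hF N.lt_succ_self] at hexp
  simpa only [one_mul, prod_mul_distrib, prod_const, mul_pow] using hexp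

theorem sum_evenPartitions_eq_factorial_mul_coeff_flog (a : ℕ → ℝ) {N : ℕ} (hN : N ≠ 0) :
    ∑ π ∈ evenPartitions N,
        ((-1 : ℝ) ^ (π.parts.card - 1) * ((π.parts.card - 1)! : ℝ) *
          ∏ B ∈ π.parts, (B.card ! : ℝ)) * ∏ B ∈ π.parts, a (B.card / 2) =
      N ! * coeff N (flog (coeffSeries a)) := by
  have hE : constantCoeff (coeffSeries a - 1) = 0 := by simp [constantCoeff_coeffSeries]
  have hlog := sum_finpartition_eq_factorial_mul_coeff_egfCompTrunc hE
    (fun k => (-1) ^ (k - 1) * ((k - 1)! : ℝ)) (univ : Finset (Fin N))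
  rw [sum_finpartition_eq_sum_evenPartitions (fun k => (-1) ^ (k - 1) * ((k - 1)! : ℝ))
      (fun j => (j ! : ℝ) * coeff j (coeffSeries a - 1)) (fun j => j ! * a (j / 2))
      fun j hj => by
        rw [map_sub, coeff_one, if_neg hj, sub_zero, coeff_coeffSeries a hj]; split_ifs <;> ring,
    card_univ, Fintype.card_fin, ← coeff_flog_eq_coeff_egfCompTrunc hN] at hlog
  simpa only [prod_mul_distrib, ← mul_assoc] using hlog

/-- Lemma 3.3: coefficients in terms of moments and vice versa, via even set partitions. -/
theorem moment_coefficient_formulas (t : ℝ) (ht : t ≠ 0) (m a : ℕ → ℝ)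
    (h : fexp (PowerSeries.C t * evenSeries m) = coeffSeries a) :
    ∀ n : ℕ, 1 ≤ n →
      (a n = (1 / ((2 * n).factorial : ℝ)) *
        ∑ π ∈ evenPartitions (2 * n),
          ((2 * t) ^ π.parts.card * ∏ B ∈ π.parts, ((B.card - 1).factorial : ℝ)) *
            ∏ B ∈ π.parts, m (B.card / 2)) ∧
      (m n = 1 / (2 * ((2 * n - 1).factorial : ℝ) * t) *
        ∑ π ∈ evenPartitions (2 * n),
          ((-1 : ℝ) ^ (π.parts.card - 1) * ((π.parts.card - 1).factorial : ℝ) *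
            ∏ B ∈ π.parts, (B.card.factorial : ℝ)) *
            ∏ B ∈ π.parts, a (B.card / 2)) := by
  intro n hn
  have hF : constantCoeff (C t * evenSeries m) = 0 := by simp [constantCoeff_evenSeries]
  have h2n : 2 * n ≠ 0 := by omega
  have hhalf : 2 * n / 2 = n := Nat.mul_div_cancel_left n two_pos
  constructor
  · rw [sum_evenPartitions_eq_factorial_mul_coeff_fexp, h, coeff_coeffSeries a h2n,
      if_pos (even_two_mul n), hhalf]
    field_simp
  · rw [sum_evenPartitions_eq_factorial_mul_coeff_flog a h2n, ← h, flog_fexp hF, coeff_C_mul,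
      mul_left_comm ((2 * n)! : ℝ) t, factorial_mul_coeff_evenSeries m h2n,
      if_pos (even_two_mul n), hhalf]
    field_simp
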